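/- arXiv:2403.10265 — 4 statements merged into one kernel-verified Lean document; each statement's English description precedes it below -/
import Mathlib

section
/- Let G be a group and u, v, r, s elements of G satisfying the two thin dumbbell relations s*u*v = u*v*r and v*u*s = r*v*u, together with the symmetric hexagon relation u*s*u = v*r*v. Then the rank-4 braid relation holds between s and u^2, i.e. s*u^2*s*u^2 = u^2*s*u^2*s. -/
theorem thin_dumbbell_sym_hex_give_br4 {G : Type*} [Group G] (u v r s : G)
    (h1 : s * u * v = u * v * r) (h2 : v * u * s = r * v * u)
    (h3 : u * s * u = v * r * v) :
    s * u ^ 2 * s * u ^ 2 = u ^ 2 * s * u ^ 2 * s := by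
  calc s * u ^ 2 * s * u ^ 2 = s * u * (u * s * u) * u := by simp only [pow_two, mul_assoc]
    _ = (s * u * v) * (r * v * u) := by rw [h3]; simp only [mul_assoc]
    _ = (u * v * r) * (v * u * s) := by rw [h1, h2]
    _ = u * (v * r * v) * u * s := by simp only [mul_assoc]
    _ = u ^ 2 * s * u ^ 2 * s := by rw [← h3]; simp only [pow_two, mul_assoc]
end

section
/- Let G be a group and u, v, r, s elements of G satisfying u*s*u = v*r*v and v*u*s = r*v*u. Then s*u^2*s^{-1} = u^{-1}*v^2*u. -/
theorem conj_two_cycle {G : Type*} [Group G] (u v r s : G)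
    (h1 : u * s * u = v * r * v) (h2 : v * u * s = r * v * u) :
    s * u ^ 2 * s⁻¹ = u⁻¹ * v ^ 2 * u := by
  have hr : r = (v * u) * s * (v * u)⁻¹ :=
    eq_mul_inv_of_mul_eq (by rw [h2, mul_assoc])
  have hv : v * v = u * s * u * (u * s * u⁻¹)⁻¹ :=
    eq_mul_inv_of_mul_eq (by rw [h1, hr]; group)
  rw [pow_two, pow_two, hv]
  group
end

section
/- Let G be a group and u, v, r, s elements of G satisfying s*u*v = u*v*r and u*s*u = v*r*v. Then s*u*v^2 = u^2*s*u, and consequently v^{-1}*u^2*v = r*v^2*r^{-1}. -/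
section
variable {G : Type*} [Group G] {u v r s : G}

theorem mul_mul_sq_eq_sq_mul_mul (h1 : s * u * v = u * v * r) (h2 : u * s * u = v * r * v) :
    s * u * v ^ 2 = u ^ 2 * s * u :=
  calc s * u * v ^ 2 = s * u * v * v := by simp only [sq, mul_assoc]
    _ = u * (v * r * v) := by rw [h1]; simp only [mul_assoc]
    _ = u * (u * s * u) := by rw [h2]
    _ = u ^ 2 * s * u := by simp only [sq, mul_assoc]

theorem inv_mul_sq_mul_eq_mul_sq_mul_inv (h1 : s * u * v = u * v * r)
    (h3 : s * u * v ^ 2 = u ^ 2 * s * u) :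
    v⁻¹ * u ^ 2 * v = r * v ^ 2 * r⁻¹ := by
  -- Both sides of `h3 * v` contain `s * u * v`; trading it for `u * v * r` and cancelling `u`
  -- leaves `u ^ 2 * (v * r) = (v * r) * v ^ 2`.
  have hu : u * (u ^ 2 * v * r) = u * (v * r * v ^ 2) :=
    calc u * (u ^ 2 * v * r) = u ^ 2 * (u * v * r) := by simp only [sq, mul_assoc]
      _ = u ^ 2 * s * u * v := by rw [← h1]; simp only [sq, mul_assoc]
      _ = s * u * v * v ^ 2 := by rw [← h3]; simp only [sq, mul_assoc]
      _ = u * (v * r * v ^ 2) := by rw [h1]; simp only [sq, mul_assoc]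
  have hvr : u ^ 2 * v * r = v * r * v ^ 2 := mul_left_cancel hu
  calc v⁻¹ * u ^ 2 * v = v⁻¹ * (u ^ 2 * v * r) * r⁻¹ := by simp [sq, mul_assoc]
    _ = r * v ^ 2 * r⁻¹ := by rw [hvr]; simp [sq, mul_assoc]

end

theorem lozenge_conj {G : Type*} [Group G] (u v r s : G)
    (h1 : s * u * v = u * v * r) (h2 : u * s * u = v * r * v) :
    s * u * v ^ 2 = u ^ 2 * s * u ∧ v⁻¹ * u ^ 2 * v = r * v ^ 2 * r⁻¹ :=
  have h3 := mul_mul_sq_eq_sq_mul_mul h1 h2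
  ⟨h3, inv_mul_sq_mul_eq_mul_sq_mul_inv h1 h3⟩
end

section
/- Let G be a group and ζ, η, x ∈ G such that the rank-4 braid relation ζ*η*ζ*η = η*ζ*η*ζ holds, ζ commutes with x, and the braid relation η*x*η = x*η*x holds. Then the braid relation holds between a := ζ*η*ζ^{-1} and x' := η^{-1}*x*η, i.e. a*x'*a = x'*a*x'. -/
/-!
In the Artin group of type `B₂` the relation `ζηζη = ηζηζ` says exactly that `ζηζ⁻¹` is the
conjugate of `η` by `ζη`; since `ζ` commutes with `x`, the same element `ζη` conjugates `x` to
`η⁻¹xη`. So the pair `(ζηζ⁻¹, η⁻¹xη)` is the image of `(η, x)` under one inner automorphism,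
which carries the braid relation of `η` and `x` over.
-/

section BraidConj

variable {G : Type*} [Group G]

theorem braid_conj (g : G) {a b : G} (h : a * b * a = b * a * b) :
    (g⁻¹ * a * g) * (g⁻¹ * b * g) * (g⁻¹ * a * g)
      = (g⁻¹ * b * g) * (g⁻¹ * a * g) * (g⁻¹ * b * g) :=
  calc (g⁻¹ * a * g) * (g⁻¹ * b * g) * (g⁻¹ * a * g) = g⁻¹ * (a * b * a) * g := by group
    _ = g⁻¹ * (b * a * b) * g := by rw [h]
    _ = (g⁻¹ * b * g) * (g⁻¹ * a * g) * (g⁻¹ * b * g) := by group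

theorem mul_mul_inv_eq_conj_of_braid4 {ζ η : G} (h : ζ * η * ζ * η = η * ζ * η * ζ) :
    ζ * η * ζ⁻¹ = (ζ * η)⁻¹ * η * (ζ * η) :=
  calc ζ * η * ζ⁻¹ = (ζ * η)⁻¹ * (ζ * η * ζ * η) * ζ⁻¹ := by group
    _ = (ζ * η)⁻¹ * (η * ζ * η * ζ) * ζ⁻¹ := by rw [h]
    _ = (ζ * η)⁻¹ * η * (ζ * η) := by group

end BraidConj

theorem braid_of_conj' {G : Type*} [Group G] (ζ η x : G)
    (hbr4 : ζ * η * ζ * η = η * ζ * η * ζ)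
    (hco : ζ * x = x * ζ) (hbr : η * x * η = x * η * x) :
    (ζ * η * ζ⁻¹) * (η⁻¹ * x * η) * (ζ * η * ζ⁻¹)
      = (η⁻¹ * x * η) * (ζ * η * ζ⁻¹) * (η⁻¹ * x * η) := by
  have hx : η⁻¹ * x * η = (ζ * η)⁻¹ * x * (ζ * η) :=
    calc η⁻¹ * x * η = η⁻¹ * (ζ⁻¹ * x * ζ) * η := by rw [Commute.inv_mul_cancel hco]
      _ = (ζ * η)⁻¹ * x * (ζ * η) := by group
  rw [mul_mul_inv_eq_conj_of_braid4 hbr4, hx]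
  exact braid_conj (ζ * η) hbr
end
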